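/- For every complex number q with |q| < 1, the Eisenstein series P(q) = 1 − 24·∑_{n=1}^∞ n qⁿ/(1 − qⁿ) satisfies P(q) = 3·𝒫(q) − 2·e(q). -/

import Mathlib

open Complex

/-- The normalized Eisenstein series `𝒫(q) = 1 + 8 ∑_{n≥1} (-1)^{n-1} n qⁿ/(1-qⁿ)`. -/
noncomputable def mP (q : ℂ) : ℂ :=
  1 + 8 * ∑' n : ℕ, (-1) ^ n * ((n : ℂ) + 1) * q ^ (n + 1) / (1 - q ^ (n + 1))

/-- The normalized Eisenstein series `e(q) = 1 + 24 ∑_{n≥1} n qⁿ/(1+qⁿ)`. -/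
noncomputable def ee (q : ℂ) : ℂ :=
  1 + 24 * ∑' n : ℕ, ((n : ℂ) + 1) * q ^ (n + 1) / (1 + q ^ (n + 1))

/-- The normalized Eisenstein series `𝒬(q) = 1 - 16 ∑_{n≥1} (-1)^{n-1} n³ qⁿ/(1-qⁿ)`. -/
noncomputable def mQ (q : ℂ) : ℂ :=
  1 - 16 * ∑' n : ℕ, (-1) ^ n * ((n : ℂ) + 1) ^ 3 * q ^ (n + 1) / (1 - q ^ (n + 1))

/-- Ramanujan's Eisenstein series `P(q) = 1 - 24 ∑_{n≥1} n qⁿ/(1-qⁿ)`. -/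
noncomputable def ramP (q : ℂ) : ℂ :=
  1 - 24 * ∑' n : ℕ, ((n : ℂ) + 1) * q ^ (n + 1) / (1 - q ^ (n + 1))

/-!
Write `L(q) = ∑_{n≥1} n qⁿ/(1-qⁿ)`, so that `P = 1 - 24 L(q)`. The partial fraction
`x/(1+x) = x/(1-x) - 2x²/(1-x²)` gives `∑ n qⁿ/(1+qⁿ) = L(q) - 2 L(q²)`. The terms of
`L(q)` with even `n = 2m` are twice the terms of `L(q²)`, so splitting by parity gives
`∑ (-1)^{n-1} n qⁿ/(1-qⁿ) = L(q) - 4 L(q²)`. Hence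
`3𝒫 - 2e = 1 + 24 (L(q) - 4 L(q²)) - 48 (L(q) - 2 L(q²)) = 1 - 24 L(q) = P`.
-/

lemma tsum_sub_tsum_neg_one_pow_mul {R : Type*} [NormedRing R] [CompleteSpace R]
    {f : ℕ → R} (hf : Summable f) :
    ∑' n, f n - ∑' n, (-1) ^ n * f n = 2 * ∑' k, f (2 * k + 1) := by
  have heven : Summable fun k ↦ f (2 * k) :=
    hf.comp_injective (mul_right_injective₀ two_ne_zero)
  have hodd : Summable fun k ↦ f (2 * k + 1) :=
    hf.comp_injective ((add_left_injective 1).comp (mul_right_injective₀ two_ne_zero))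
  have hpow_even (k : ℕ) : (-1 : R) ^ (2 * k) = 1 := by simp [pow_mul]
  have hpow_odd (k : ℕ) : (-1 : R) ^ (2 * k + 1) = -1 := by simp [pow_succ, pow_mul]
  have halt : ∑' n, (-1) ^ n * f n = ∑' k, f (2 * k) - ∑' k, f (2 * k + 1) := by
    rw [← tsum_even_add_odd (f := fun n ↦ (-1) ^ n * f n) (by simpa [hpow_even] using heven)
      (by simpa [hpow_odd] using hodd.neg)]
    simp only [hpow_even, hpow_odd, one_mul, neg_one_mul, tsum_neg, sub_eq_add_neg]
  rw [halt, ← tsum_even_add_odd heven hodd, two_mul]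
  abel

lemma div_one_add_eq_div_one_sub_sub {K : Type*} [Field K] {x : K} (hx : x ^ 2 ≠ 1) :
    x / (1 + x) = x / (1 - x) - 2 * (x ^ 2 / (1 - x ^ 2)) := by
  have hsub : 1 - x ≠ 0 := fun h ↦ hx (by linear_combination (-1 - x) * h)
  have hadd : 1 + x ≠ 0 := fun h ↦ hx (by linear_combination (x - 1) * h)
  have hsq : 1 - x ^ 2 ≠ 0 := sub_ne_zero.mpr hx.symm
  field_simp
  ring

section Lambert

variable {K : Type*} [Field K]

/-- `lambertTerm q n` is the term `m qᵐ / (1 - qᵐ)` of `L(q)` with `m = n + 1`. -/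
noncomputable def lambertTerm (q : K) (n : ℕ) : K :=
  ((n : K) + 1) * q ^ (n + 1) / (1 - q ^ (n + 1))

lemma lambertTerm_two_mul_add_one (q : K) (k : ℕ) :
    lambertTerm q (2 * k + 1) = 2 * lambertTerm (q ^ 2) k := by
  simp only [lambertTerm, ← pow_mul]
  rw [show 2 * k + 1 + 1 = 2 * (k + 1) by ring]
  push_cast
  ring

lemma div_one_add_pow_succ_eq (q : K) (n : ℕ) (hq : (q ^ (n + 1)) ^ 2 ≠ 1) :
    ((n : K) + 1) * q ^ (n + 1) / (1 + q ^ (n + 1)) =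
      lambertTerm q n - 2 * lambertTerm (q ^ 2) n := by
  rw [lambertTerm, lambertTerm, mul_div_assoc, div_one_add_eq_div_one_sub_sub hq, ← pow_mul,
    mul_comm (n + 1), pow_mul]
  ring

end Lambert

section Normed

variable {𝕜 : Type*} [NontriviallyNormedField 𝕜] [CompleteSpace 𝕜] {q : 𝕜}

omit [CompleteSpace 𝕜] in
lemma norm_pow_succ_lt_one (hq : ‖q‖ < 1) (n : ℕ) : ‖q ^ (n + 1)‖ < 1 := by
  simpa using pow_lt_one₀ (norm_nonneg q) hq n.succ_ne_zero

lemma summable_lambertTerm (hq : ‖q‖ < 1) : Summable (lambertTerm q) := by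
  have h := summable_norm_pow_mul_geometric_div_one_sub 1 hq
  rw [← summable_nat_add_iff 1] at h
  refine h.congr fun n ↦ ?_
  simp [lambertTerm]

lemma tsum_neg_one_pow_mul_lambertTerm (hq : ‖q‖ < 1) :
    ∑' n, (-1) ^ n * lambertTerm q n =
      ∑' n, lambertTerm q n - 4 * ∑' n, lambertTerm (q ^ 2) n := by
  have h := tsum_sub_tsum_neg_one_pow_mul (R := 𝕜) (summable_lambertTerm hq)
  simp only [lambertTerm_two_mul_add_one, tsum_mul_left] at h
  linear_combination -h

lemma tsum_div_one_add_pow_succ (hq : ‖q‖ < 1) :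
    ∑' n : ℕ, ((n : 𝕜) + 1) * q ^ (n + 1) / (1 + q ^ (n + 1)) =
      ∑' n, lambertTerm q n - 2 * ∑' n, lambertTerm (q ^ 2) n := by
  have hsq (n : ℕ) : (q ^ (n + 1)) ^ 2 ≠ 1 := fun h ↦ by
    simpa [h] using norm_pow_succ_lt_one (q := q ^ (n + 1)) (norm_pow_succ_lt_one hq n) 1
  have hq2 : ‖q ^ 2‖ < 1 := norm_pow_succ_lt_one hq 1
  rw [tsum_congr fun n ↦ div_one_add_pow_succ_eq q n (hsq n),
    (summable_lambertTerm hq).tsum_sub ((summable_lambertTerm hq2).mul_left 2), tsum_mul_left]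

end Normed

/-- For `|q| < 1`, one has `P(q) = 3·𝒫(q) − 2·e(q)`. -/
theorem ramP_eq (q : ℂ) (hq : ‖q‖ < 1) :
    ramP q = 3 * mP q - 2 * ee q := by
  have hmP : mP q = 1 + 8 * ∑' n, (-1) ^ n * lambertTerm q n := by
    simp only [mP, lambertTerm, mul_assoc, mul_div_assoc]
  rw [ramP, hmP, ee, tsum_neg_one_pow_mul_lambertTerm hq, tsum_div_one_add_pow_succ hq]
  simp only [lambertTerm]
  ring
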